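/- arXiv:0909.0347 — 7 statements merged into one kernel-verified Lean document; each statement's English description precedes it below -/
import Mathlib

section
/- A finite strategic game G = (N, X, π) has the lexicographical improvement property (LIP) if and only if G admits a generalized strong ordinal potential, i.e., a function P : X → ℝ with P(x) − P(y) > 0 for every improving move (x,y). -/
open Finset

/-- The vector `a` sorted in non-increasing order. -/
noncomputable def sortDesc {α : Type*} [LinearOrder α] {q : ℕ} (a : Fin q → α) : Fin q → α :=
  fun i => a (Tuple.sort a i.rev)

/-- `a` is strictly sorted-lexicographically smaller than `b`. -/
def SLexLt {α : Type*} [LinearOrder α] {q : ℕ} (a b : Fin q → α) : Prop :=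
  ∃ m : Fin q, (∀ i, i < m → sortDesc a i = sortDesc b i) ∧ sortDesc a m < sortDesc b m

/-- Sorted-lexicographic comparison of vectors indexed by an arbitrary finite type. -/
def SLexLtOn {α : Type*} [LinearOrder α] {ι : Type*} [Fintype ι] (a b : ι → α) : Prop :=
  SLexLt (a ∘ (Fintype.equivFin ι).symm) (b ∘ (Fintype.equivFin ι).symm)

/-- An improving move: some nonempty coalition `S` deviates (players outside `S`
keep their strategies) and every member of `S` strictly decreases her cost. -/
def ImprovingMove {ι : Type*} {X : ι → Type*} {β : Type*} [Preorder β]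
    (π : (∀ i, X i) → ι → β) (x y : ∀ i, X i) : Prop :=
  ∃ S : Finset ι, S.Nonempty ∧ (∀ i ∉ S, y i = x i) ∧ ∀ i ∈ S, π y i < π x i


private lemma slex_iff' {q : ℕ} (a b : Fin q → ℝ) :
    SLexLt a b ↔ toLex (sortDesc a) < toLex (sortDesc b) := Iff.rfl

private lemma slex_trans {q : ℕ} {a b c : Fin q → ℝ}
    (h1 : SLexLt a b) (h2 : SLexLt b c) : SLexLt a c := by
  rw [slex_iff'] at *
  exact lt_trans h1 h2

private lemma slex_irrefl {q : ℕ} (a : Fin q → ℝ) : ¬ SLexLt a a := by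
  rw [slex_iff']
  exact lt_irrefl _

/-- A finite strategic game has the lexicographical improvement
property (LIP) iff it admits a generalized strong ordinal potential. -/
theorem stmt_1 {ι : Type*} [Fintype ι] [Nonempty ι] {X : ι → Type*}
    [∀ i, Fintype (X i)] [∀ i, Nonempty (X i)]
    (π : (∀ i, X i) → ι → ℝ) (hπ : ∀ x i, 0 ≤ π x i) :
    (∃ (q : ℕ) (φ : (∀ i, X i) → Fin q → ℝ), (∀ x j, 0 ≤ φ x j) ∧
        ∀ x y, ImprovingMove π x y → SLexLt (φ y) (φ x)) ↔
    (∃ P : (∀ i, X i) → ℝ, ∀ x y, ImprovingMove π x y → P y < P x) := by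
  classical
  constructor
  · rintro ⟨q, φ, -, hdec⟩
    refine ⟨fun x => ((Finset.univ.filter fun z => SLexLt (φ z) (φ x)).card : ℝ), ?_⟩
    intro x y hxy
    have hyx : SLexLt (φ y) (φ x) := hdec x y hxy
    have hsub : (Finset.univ.filter fun z => SLexLt (φ z) (φ y)) ⊂
        (Finset.univ.filter fun z => SLexLt (φ z) (φ x)) := by
      constructor
      · intro z hz
        simp only [Finset.mem_filter, Finset.mem_univ, true_and] at hz ⊢
        exact slex_trans hz hyx
      · intro hsub
        have hy : y ∈ (Finset.univ.filter fun z => SLexLt (φ z) (φ x)) := by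
          simp [hyx]
        have := hsub hy
        simp only [Finset.mem_filter, Finset.mem_univ, true_and] at this
        exact slex_irrefl _ this
    simp only []
    exact_mod_cast Finset.card_lt_card hsub
  · rintro ⟨P, hP⟩
    have hne : (Finset.univ : Finset (∀ i, X i)).Nonempty := Finset.univ_nonempty
    set c := Finset.univ.inf' hne P with hc
    refine ⟨1, fun x => fun _ => P x - c, ?_, ?_⟩
    · intro x j
      have : c ≤ P x := Finset.inf'_le _ (Finset.mem_univ x)
      dsimp only
      linarith
    · intro x y hxy
      refine ⟨0, ?_, ?_⟩
      · intro i hi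
        exact absurd hi (by simp [Fin.lt_def])
      · have := hP x y hxy
        simp only [sortDesc]
        linarith
end

section
/- Let G = (N, X, π) be a finite strategic game that has the LIP for a function φ : X → ℝ≥0^q. Then there exists M ∈ ℕ such that P(x) = Σ_{i=1}^q φ_i(x)^M is a generalized strong ordinal potential for G, i.e., P(x) − P(y) > 0 for every improving move (x,y). -/
open Finset

lemma sortDesc_antitone {q : ℕ} (a : Fin q → ℝ) : Antitone (sortDesc a) := by
  intro i j hij
  exact Tuple.monotone_sort a (Fin.rev_le_rev.mpr hij)

lemma sum_pow_sortDesc {q : ℕ} (a : Fin q → ℝ) (M : ℕ) :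
    ∑ j : Fin q, a j ^ M = ∑ j : Fin q, sortDesc a j ^ M := by
  have := Equiv.sum_comp ((Fin.revPerm).trans (Tuple.sort a)) (fun j => a j ^ M)
  simpa [sortDesc] using this.symm

lemma aux {q : ℕ} (a b : Fin q → ℝ) (ha : ∀ j, 0 ≤ a j) (hb : ∀ j, 0 ≤ b j)
    (h : SLexLt a b) : ∃ M₀ : ℕ, ∀ M, M₀ ≤ M → ∑ j : Fin q, a j ^ M < ∑ j : Fin q, b j ^ M := by
  obtain ⟨m, hpre, hm⟩ := h
  set c := sortDesc a with hc'
  set d := sortDesc b with hd'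
  have hc : ∀ j, 0 ≤ c j := fun j => ha _
  have hd : ∀ j, 0 ≤ d j := fun j => hb _
  have hca : Antitone c := sortDesc_antitone a
  have hs : 0 < d m := lt_of_le_of_lt (hc m) hm
  -- choose M₀ with (q : ℝ) * c m ^ M < d m ^ M for all M ≥ M₀
  have key : ∃ M₀ : ℕ, 1 ≤ M₀ ∧ ∀ M, M₀ ≤ M → (q : ℝ) * c m ^ M < d m ^ M := by
    rcases eq_or_lt_of_le (hc m) with h0 | h0
    · refine ⟨1, le_refl 1, fun M hM => ?_⟩
      rw [← h0, zero_pow (by omega : M ≠ 0), mul_zero]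
      exact pow_pos hs M
    · set t : ℝ := c m / d m with ht'
      have ht0 : 0 < t := div_pos h0 hs
      have ht1 : t < 1 := (div_lt_one hs).mpr hm
      obtain ⟨n, hn⟩ := exists_pow_lt_of_lt_one
        (by positivity : (0:ℝ) < 1 / (q + 1)) ht1
      refine ⟨max n 1, le_max_right _ _, fun M hM => ?_⟩
      have htM : t ^ M ≤ t ^ n :=
        pow_le_pow_of_le_one ht0.le ht1.le (le_trans (le_max_left _ _) hM)
      have hq : (q : ℝ) * t ^ M < 1 := by
        have h2 : (q : ℝ) * t ^ M ≤ (q : ℝ) * t ^ n :=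
          mul_le_mul_of_nonneg_left htM (Nat.cast_nonneg q)
        have h3 : (q : ℝ) * t ^ n < (q : ℝ) * (1 / (q + 1)) ∨ (q:ℝ) = 0 := by
          rcases Nat.eq_zero_or_pos q with hq0 | hq0
          · right; exact_mod_cast hq0
          · left; exact mul_lt_mul_of_pos_left hn (by exact_mod_cast hq0)
        rcases h3 with h3 | h3
        · have h4 : (q : ℝ) * (1 / (q + 1)) < 1 := by
            rw [mul_one_div, div_lt_one (by positivity)]; linarith
          linarith
        · rw [h3, zero_mul] at *; linarith [pow_nonneg ht0.le M]
      have hcm : c m = t * d m := by rw [ht', div_mul_cancel₀ _ hs.ne']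
      calc (q : ℝ) * c m ^ M = (q : ℝ) * t ^ M * d m ^ M := by
            rw [hcm, mul_pow]; ring
        _ < 1 * d m ^ M := by
            exact mul_lt_mul_of_pos_right hq (pow_pos hs M)
        _ = d m ^ M := one_mul _
  obtain ⟨M₀, hM₀1, hM₀⟩ := key
  refine ⟨M₀, fun M hM => ?_⟩
  rw [sum_pow_sortDesc a, sum_pow_sortDesc b, ← hc', ← hd']
  rw [← Finset.sum_filter_add_sum_filter_not univ (· < m) (fun j => c j ^ M),
      ← Finset.sum_filter_add_sum_filter_not univ (· < m) (fun j => d j ^ M)]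
  have h1 : ∑ j ∈ filter (· < m) univ, c j ^ M = ∑ j ∈ filter (· < m) univ, d j ^ M :=
    Finset.sum_congr rfl fun j hj => by rw [hpre j (Finset.mem_filter.mp hj).2]
  have h2 : ∑ j ∈ filter (fun j => ¬ j < m) univ, c j ^ M ≤ (q : ℝ) * c m ^ M := by
    calc ∑ j ∈ filter (fun j => ¬ j < m) univ, c j ^ M
        ≤ ∑ j ∈ filter (fun j => ¬ j < m) univ, c m ^ M := by
          refine Finset.sum_le_sum fun j hj => ?_
          exact pow_le_pow_left₀ (hc j) (hca (not_lt.mp (Finset.mem_filter.mp hj).2)) M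
      _ = ((filter (fun j => ¬ j < m) univ).card : ℝ) * c m ^ M := by
          rw [Finset.sum_const, nsmul_eq_mul]
      _ ≤ (q : ℝ) * c m ^ M := by
          refine mul_le_mul_of_nonneg_right ?_ (pow_nonneg (hc m) M)
          exact_mod_cast (Finset.card_filter_le _ _).trans (by simp)
  have h3 : d m ^ M ≤ ∑ j ∈ filter (fun j => ¬ j < m) univ, d j ^ M := by
    refine Finset.single_le_sum (fun j _ => pow_nonneg (hd j) M) ?_
    simp
  have h4 := hM₀ M hM
  linarith

/-- If a finite strategic game has the LIP for
`φ : X → ℝ≥0^q`, then there is `M ∈ ℕ` such that `P x = ∑ i, (φ x i)^M` is a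
generalized strong ordinal potential. -/
theorem stmt_2 {ι : Type*} [Fintype ι] [Nonempty ι] {X : ι → Type*}
    [∀ i, Fintype (X i)] [∀ i, Nonempty (X i)]
    (π : (∀ i, X i) → ι → ℝ) (hπ : ∀ x i, 0 ≤ π x i)
    (q : ℕ) (φ : (∀ i, X i) → Fin q → ℝ) (hφ : ∀ x j, 0 ≤ φ x j)
    (hlip : ∀ x y, ImprovingMove π x y → SLexLt (φ y) (φ x)) :
    ∃ M : ℕ, ∀ x y, ImprovingMove π x y →
      ∑ j : Fin q, (φ y j) ^ M < ∑ j : Fin q, (φ x j) ^ M := by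
  classical
  letI : DecidableEq ι := Classical.decEq ι
  letI : Fintype ((∀ i, X i) × (∀ i, X i)) := inferInstance
  set g : ((∀ i, X i) × (∀ i, X i)) → ℕ := fun p =>
    if h : ImprovingMove π p.1 p.2 then
      (aux (φ p.2) (φ p.1) (hφ _) (hφ _) (hlip _ _ h)).choose else 0 with hg
  refine ⟨Finset.univ.sup g, fun x y h => ?_⟩
  have hle : g (x, y) ≤ Finset.univ.sup g := Finset.le_sup (Finset.mem_univ _)
  have hgxy : g (x, y) = (aux (φ y) (φ x) (hφ _) (hφ _) (hlip x y h)).choose := by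
    simp only [hg, dif_pos h]
  exact (aux (φ y) (φ x) (hφ _) (hφ _) (hlip x y h)).choose_spec _ (hgxy ▸ hle)
end

section
/- Every finite strategic game G = (N, X, π) with the lexicographical improvement property (LIP) possesses a strong Nash equilibrium. -/
/-!
An improving move strictly decreases `φ` sorted in non-increasing order, compared
lexicographically. Over the finite set of strategy profiles this potential attains a
minimum, and no improving move can leave a minimiser.
-/

open Finset

theorem slexLt_iff_toLex_sortDesc_lt {α : Type*} [LinearOrder α] {q : ℕ} (a b : Fin q → α) :
    SLexLt a b ↔ toLex (sortDesc a) < toLex (sortDesc b) :=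
  Iff.rfl

theorem Finite.exists_forall_not_rel_of_lt {α β : Type*} [Finite α] [Nonempty α] [Preorder β]
    (r : α → α → Prop) (f : α → β) (hf : ∀ x y, r x y → f y < f x) :
    ∃ x, ∀ y, ¬ r x y := by
  obtain ⟨x, -, hx⟩ := Set.univ.toFinite.exists_minimalFor f Set.univ Set.univ_nonempty
  exact ⟨x, fun y hxy => (hf x y hxy).not_ge (hx trivial (hf x y hxy).le)⟩

theorem stmt_3_general {ι : Type*} [Fintype ι] {X : ι → Type*}
    [∀ i, Fintype (X i)] [∀ i, Nonempty (X i)]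
    (π : (∀ i, X i) → ι → ℝ)
    (hlip : ∃ (q : ℕ) (φ : (∀ i, X i) → Fin q → ℝ), (∀ x j, 0 ≤ φ x j) ∧
        ∀ x y, ImprovingMove π x y → SLexLt (φ y) (φ x)) :
    ∃ x : ∀ i, X i, ∀ y, ¬ ImprovingMove π x y := by
  obtain ⟨q, φ, -, hφ⟩ := hlip
  exact Finite.exists_forall_not_rel_of_lt (ImprovingMove π) (fun x => toLex (sortDesc (φ x)))
    fun x y hxy => (slexLt_iff_toLex_sortDesc_lt _ _).1 (hφ x y hxy)

/-- Every finite strategic game with the LIP possesses a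
strong Nash equilibrium. -/
theorem stmt_3 {ι : Type*} [Fintype ι] [Nonempty ι] {X : ι → Type*}
    [∀ i, Fintype (X i)] [∀ i, Nonempty (X i)]
    (π : (∀ i, X i) → ι → ℝ) (hπ : ∀ x i, 0 ≤ π x i)
    (hlip : ∃ (q : ℕ) (φ : (∀ i, X i) → Fin q → ℝ), (∀ x j, 0 ≤ φ x j) ∧
        ∀ x y, ImprovingMove π x y → SLexLt (φ y) (φ x)) :
    ∃ x : ∀ i, X i, ∀ y, ¬ ImprovingMove π x y :=
  stmt_3_general π hlip
end

section
/- Let G = (N, X, π) be a finite strategic game with the π-LIP. Then there exists a strong Nash equilibrium x* ∈ X such that L_∞(x*) = min_{y∈X} L_∞(y), where L_∞(z) = max_{i∈N} π_i(z); in other words, the strong price of stability of G with respect to the social cost L_∞ equals 1. -/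
open Finset

/-!
A strategy profile whose sorted cost vector is lexicographically minimal is a strong Nash
equilibrium, since by the π-LIP any improving move would lower that vector. The first entry of
the sorted cost vector is `L_∞`, so a profile with strictly smaller `L_∞` would also be
lexicographically smaller; hence the minimizer also minimizes `L_∞`.
-/

section SortedLex

variable {α : Type*} [LinearOrder α]

theorem sortDesc_zero_eq_sup' {q : ℕ} [NeZero q] (a : Fin q → α) :
    sortDesc a 0 = univ.sup' univ_nonempty a := by
  refine le_antisymm (le_sup' a (mem_univ _)) (sup'_le _ _ fun i _ => ?_)
  have hi : (Tuple.sort a).symm i ≤ (0 : Fin q).rev := Fin.le_rev_iff.mpr (Fin.zero_le _)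
  simpa [sortDesc] using Tuple.monotone_sort a hi

theorem slexLt_of_sortDesc_zero_lt {q : ℕ} [NeZero q] {a b : Fin q → α}
    (h : sortDesc a 0 < sortDesc b 0) : SLexLt a b :=
  ⟨0, fun i hi => absurd hi (Fin.not_lt_zero i), h⟩

variable {ι : Type*} [Fintype ι]

theorem sup'_comp_equiv_symm [Nonempty ι] {κ : Type*} [Fintype κ] [Nonempty κ]
    (e : ι ≃ κ) (c : ι → α) :
    univ.sup' univ_nonempty (c ∘ e.symm) = univ.sup' univ_nonempty c :=
  le_antisymm (sup'_le _ _ fun _ _ => le_sup' c (mem_univ _))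
    (sup'_le _ _ fun i _ => le_sup'_of_le (c ∘ e.symm) (mem_univ (e i)) (by simp))

theorem slexLtOn_of_sup'_lt [Nonempty ι] {a b : ι → α}
    (h : univ.sup' univ_nonempty a < univ.sup' univ_nonempty b) : SLexLtOn a b := by
  have : NeZero (Fintype.card ι) := ⟨Fintype.card_ne_zero⟩
  apply slexLt_of_sortDesc_zero_lt
  rwa [sortDesc_zero_eq_sup', sortDesc_zero_eq_sup', sup'_comp_equiv_symm,
    sup'_comp_equiv_symm]

theorem exists_forall_not_slexLtOn {β : Type*} [Finite β] [Nonempty β] (f : β → ι → α) :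
    ∃ x, ∀ y, ¬ SLexLtOn (f y) (f x) := by
  obtain ⟨x, hx⟩ := Finite.exists_min
    (fun z => toLex (sortDesc (f z ∘ (Fintype.equivFin ι).symm)))
  -- `SLexLt a b` unfolds to `toLex (sortDesc a) < toLex (sortDesc b)` in `Pi.Lex`.
  exact ⟨x, fun y hy => (hx y).not_gt hy⟩

end SortedLex

theorem stmt_6_general {ι : Type*} [Fintype ι] [Nonempty ι] {X : ι → Type*}
    [∀ i, Fintype (X i)] [∀ i, Nonempty (X i)]
    (π : (∀ i, X i) → ι → ℝ)
    (hlip : ∀ x y, ImprovingMove π x y → SLexLtOn (π y) (π x)) :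
    ∃ x : ∀ i, X i, (∀ y, ¬ ImprovingMove π x y) ∧
      ∀ y : ∀ i, X i,
        Finset.univ.sup' Finset.univ_nonempty (π x) ≤
          Finset.univ.sup' Finset.univ_nonempty (π y) := by
  obtain ⟨x, hx⟩ := exists_forall_not_slexLtOn π
  exact ⟨x, fun y hy => hx y (hlip x y hy),
    fun y => not_lt.mp fun hlt => hx y (slexLtOn_of_sup'_lt hlt)⟩

/-- In a finite strategic game with the π-LIP there is a
strong Nash equilibrium minimizing the social cost `L_∞(z) = max_i π_i(z)`;
i.e. the strong price of stability w.r.t. `L_∞` is 1. -/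
theorem stmt_6 {ι : Type*} [Fintype ι] [Nonempty ι] {X : ι → Type*}
    [∀ i, Fintype (X i)] [∀ i, Nonempty (X i)]
    (π : (∀ i, X i) → ι → ℝ) (hπ : ∀ x i, 0 ≤ π x i)
    (hlip : ∀ x y, ImprovingMove π x y → SLexLtOn (π y) (π x)) :
    ∃ x : ∀ i, X i, (∀ y, ¬ ImprovingMove π x y) ∧
      ∀ y : ∀ i, X i,
        Finset.univ.sup' Finset.univ_nonempty (π x) ≤
          Finset.univ.sup' Finset.univ_nonempty (π y) :=
  stmt_6_general π hlip
end

section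
/- Let G = (N, X, π) be a finite strategic game with the π-LIP. Then there exists a strong Nash equilibrium x ∈ X that is strictly Pareto efficient, i.e., there is no y ∈ X with π_i(y) ≤ π_i(x) for all i ∈ N and π_j(y) < π_j(x) for at least one j ∈ N. -/
/-!
Order the profiles by their cost vectors sorted in non-increasing order, compared
lexicographically, and take a minimal profile `x`. By the π-LIP every improving move
strictly decreases this potential, so `x` is a strong Nash equilibrium. A Pareto improvement
`y` of `x` also decreases it: sorting is monotone, so the sorted cost vector of `y` is
pointwise below that of `x`, and it is a different vector because sorting preserves the
strictly smaller total cost.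
-/

open Finset

section sortDesc

variable {α : Type*} [LinearOrder α] {q : ℕ}

theorem antitone_sortDesc (a : Fin q → α) : Antitone (sortDesc a) :=
  fun _ _ hij => Tuple.monotone_sort a (Fin.rev_le_rev.mpr hij)

theorem card_filter_le_sortDesc (a : Fin q → α) (t : α) :
    #{i | t ≤ sortDesc a i} = #{i | t ≤ a i} := by
  simp only [← Fintype.card_subtype]
  exact Fintype.card_congr ((Fin.revPerm.trans (Tuple.sort a)).subtypeEquiv fun _ => Iff.rfl)

/-- The `j`-th largest entry is the largest `t` with more than `j` entries `≥ t`; raising the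
entries only adds such entries. -/
theorem monotone_sortDesc : Monotone (sortDesc : (Fin q → α) → Fin q → α) := by
  intro a b hab j
  have key := fun c => Tuple.lt_card_ge_iff_apply_ge_of_antitone (j := j) (a := sortDesc a j)
    (antitone_sortDesc c)
  rw [← key b, card_filter_le_sortDesc]
  calc (j : ℕ) < #{i | sortDesc a j ≤ sortDesc a i} := (key a).mpr le_rfl
    _ = #{i | sortDesc a j ≤ a i} := card_filter_le_sortDesc a _
    _ ≤ #{i | sortDesc a j ≤ b i} :=
      card_le_card (monotone_filter_right _ fun i _ hi => hi.trans (hab i))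

end sortDesc

theorem sum_sortDesc {M : Type*} [AddCommMonoid M] [LinearOrder M] {q : ℕ} (a : Fin q → M) :
    ∑ i, sortDesc a i = ∑ i, a i :=
  Equiv.sum_comp (Fin.revPerm.trans (Tuple.sort a)) a

theorem strictMono_toLex_sortDesc {M : Type*} [AddCommMonoid M] [LinearOrder M]
    [IsOrderedCancelAddMonoid M] {q : ℕ} :
    StrictMono fun a : Fin q → M => toLex (sortDesc a) := by
  intro a b hab
  have hne : sortDesc a ≠ sortDesc b := fun h => by
    have hsum : ∑ i, a i < ∑ i, b i := Fintype.sum_strictMono hab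
    rw [← sum_sortDesc a, ← sum_sortDesc b, h] at hsum
    exact lt_irrefl _ hsum
  exact Pi.toLex_strictMono (lt_of_le_of_ne (monotone_sortDesc hab.le) hne)

noncomputable def sortedLex {ι M : Type*} [Fintype ι] [LinearOrder M] (a : ι → M) :
    Lex (Fin (Fintype.card ι) → M) :=
  toLex (sortDesc (a ∘ (Fintype.equivFin ι).symm))

theorem slexLtOn_iff_sortedLex_lt {ι M : Type*} [Fintype ι] [LinearOrder M] (a b : ι → M) :
    SLexLtOn a b ↔ sortedLex a < sortedLex b :=
  Iff.rfl

theorem strictMono_sortedLex {ι M : Type*} [Fintype ι] [AddCommMonoid M] [LinearOrder M]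
    [IsOrderedCancelAddMonoid M] :
    StrictMono (sortedLex : (ι → M) → Lex (Fin (Fintype.card ι) → M)) := by
  intro a b hab
  obtain ⟨hle, i, hlt⟩ := Pi.lt_def.mp hab
  refine strictMono_toLex_sortDesc (Pi.lt_def.mpr ⟨fun j => hle _, Fintype.equivFin ι i, ?_⟩)
  simpa using hlt

theorem stmt_8_general {ι : Type*} [Fintype ι] {X : ι → Type*}
    [∀ i, Fintype (X i)] [∀ i, Nonempty (X i)]
    (π : (∀ i, X i) → ι → ℝ)
    (hlip : ∀ x y, ImprovingMove π x y → SLexLtOn (π y) (π x)) :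
    ∃ x : ∀ i, X i, (∀ y, ¬ ImprovingMove π x y) ∧
      ¬ ∃ y : ∀ i, X i, (∀ i, π y i ≤ π x i) ∧ ∃ j, π y j < π x j := by
  obtain ⟨x, hx⟩ := Finite.exists_min fun x => sortedLex (π x)
  refine ⟨x, fun y hy => (hx y).not_gt ((slexLtOn_iff_sortedLex_lt _ _).mp (hlip x y hy)), ?_⟩
  rintro ⟨y, hle, j, hj⟩
  exact (hx y).not_gt (strictMono_sortedLex (Pi.lt_def.mpr ⟨hle, j, hj⟩))

/-- In a finite strategic game with the π-LIP there is a
strong Nash equilibrium that is strictly Pareto efficient. -/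
theorem stmt_8 {ι : Type*} [Fintype ι] [Nonempty ι] {X : ι → Type*}
    [∀ i, Fintype (X i)] [∀ i, Nonempty (X i)]
    (π : (∀ i, X i) → ι → ℝ) (hπ : ∀ x i, 0 ≤ π x i)
    (hlip : ∀ x y, ImprovingMove π x y → SLexLtOn (π y) (π x)) :
    ∃ x : ∀ i, X i, (∀ y, ¬ ImprovingMove π x y) ∧
      ¬ ∃ y : ∀ i, X i, (∀ i, π y i ≤ π x i) ∧ ∃ j, π y j < π x j :=
  stmt_8_general π hlip
end

section
/- Let G = (N, X, π) be an infinite strategic game where each X_i ⊆ ℝ^{n_i} is a nonempty compact set, X = ∏_{i∈N} X_i, and each π_i : X → ℝ≥0. If G has the LIP for a continuous function φ : X → ℝ≥0^q (i.e., φ(y) ≺ φ(x) for every improving move (x,y)), then G possesses a strong Nash equilibrium. -/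
open Finset

/-- helper nonempty facts -/
lemma aux_pcs_ne {q : ℕ} (i : Fin q) :
    ((univ : Finset (Fin q)).powersetCard (i.1 + 1)).Nonempty :=
  Finset.powersetCard_nonempty_of_le (by simp [Nat.succ_le_iff, i.isLt])

lemma aux_mem_ne {q : ℕ} {i : Fin q} {s : Finset (Fin q)}
    (hs : s ∈ (univ : Finset (Fin q)).powersetCard (i.1 + 1)) : s.Nonempty := by
  have := (Finset.mem_powersetCard.mp hs).2
  exact Finset.card_pos.mp (by omega)

noncomputable def kthMax {q : ℕ} (a : Fin q → ℝ) (i : Fin q) : ℝ :=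
  ((univ : Finset (Fin q)).powersetCard (i.1 + 1)).attach.sup'
    ((aux_pcs_ne i).attach)
    (fun s => s.1.inf' (aux_mem_ne s.2) a)

lemma sortDesc_eq_kthMax {q : ℕ} (a : Fin q → ℝ) (i : Fin q) :
    sortDesc a i = kthMax a i := by
  set σ := Tuple.sort a with hσ
  have hg : Monotone (a ∘ σ) := Tuple.monotone_sort a
  apply le_antisymm
  · -- sortDesc ≤ kthMax : witness the set of top i+1 indices
    have hcard : ((Finset.Ici i.rev).image σ).card = i.1 + 1 := by
      rw [Finset.card_image_of_injective _ σ.injective, Fin.card_Ici, Fin.val_rev]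
      omega
    have hmem : (Finset.Ici i.rev).image σ ∈ (univ : Finset (Fin q)).powersetCard (i.1 + 1) :=
      Finset.mem_powersetCard.mpr ⟨Finset.subset_univ _, hcard⟩
    refine le_trans ?_ (Finset.le_sup' _ (Finset.mem_attach _ ⟨_, hmem⟩))
    apply Finset.le_inf'
    intro b hb
    obtain ⟨k, hk, rfl⟩ := Finset.mem_image.mp hb
    exact hg (Finset.mem_Ici.mp hk)
  · refine Finset.sup'_le _ _ (fun s _ => ?_)
    have hcard := (Finset.mem_powersetCard.mp s.2).2
    -- there is k ≤ i.rev with σ k ∈ s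
    have : ∃ k ≤ i.rev, σ k ∈ s.1 := by
      by_contra h
      push_neg at h
      have hsub : s.1.image σ.symm ⊆ Finset.Ioi i.rev := by
        intro k hk
        obtain ⟨j, hj, rfl⟩ := Finset.mem_image.mp hk
        rw [Finset.mem_Ioi]
        by_contra hle
        exact (h _ (le_of_not_gt hle)) (by simpa using hj)
      have h1 : (s.1.image σ.symm).card = i.1 + 1 := by
        rw [Finset.card_image_of_injective _ σ.symm.injective, hcard]
      have h2 := Finset.card_le_card hsub
      rw [h1, Fin.card_Ioi, Fin.val_rev] at h2
      omega
    obtain ⟨k, hk, hks⟩ := this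
    exact le_trans (Finset.inf'_le _ hks) (hg hk)

lemma kthMax_continuousOn {α : Type*} [TopologicalSpace α] {q : ℕ} {K : Set α}
    (φ : α → Fin q → ℝ) (hcont : ContinuousOn φ K) (i : Fin q) :
    ContinuousOn (fun x => kthMax (φ x) i) K := by
  apply ContinuousOn.finset_sup'_apply
  intro s _
  apply ContinuousOn.finset_inf'_apply
  intro j _
  exact (continuous_apply j).comp_continuousOn hcont

/-- lexicographic minimization on a compact set -/
lemma lexmin {α : Type*} [TopologicalSpace α] [T2Space α] :
    ∀ (q : ℕ) (K : Set α), IsCompact K → K.Nonempty → ∀ (F : α → Fin q → ℝ),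
    (∀ j, ContinuousOn (fun x => F x j) K) →
    ∃ x ∈ K, ∀ y ∈ K, ¬ ∃ m : Fin q, (∀ i, i < m → F y i = F x i) ∧ F y m < F x m := by
  intro q
  induction q with
  | zero =>
    intro K _ hne F _
    exact ⟨hne.choose, hne.choose_spec, fun y _ h => (h.choose).elim0⟩
  | succ q ih =>
    intro K hK hne F hF
    obtain ⟨x0, hx0K, hmin⟩ := hK.exists_isMinOn hne (hF 0)
    set K' : Set α := K ∩ (fun x => F x 0) ⁻¹' {F x0 0} with hK'def
    have hK'closed : IsClosed K' :=
      (hF 0).preimage_isClosed_of_isClosed hK.isClosed isClosed_singleton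
    have hK'comp : IsCompact K' := hK.of_isClosed_subset hK'closed Set.inter_subset_left
    have hx0K' : x0 ∈ K' := ⟨hx0K, rfl⟩
    obtain ⟨x, hxK', hxmin⟩ := ih K' hK'comp ⟨x0, hx0K'⟩ (fun x j => F x j.succ)
      (fun j => ((hF j.succ).mono Set.inter_subset_left))
    refine ⟨x, hxK'.1, fun y hy h => ?_⟩
    obtain ⟨m, heq, hlt⟩ := h
    rcases Fin.eq_zero_or_eq_succ m with rfl | ⟨j, rfl⟩
    · exact absurd hlt (not_lt.mpr (le_trans (le_of_eq (hxK'.2 : F x 0 = F x0 0)) (hmin hy)))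
    · have hy0 : F y 0 = F x 0 := heq 0 (Fin.succ_pos j)
      have hyK' : y ∈ K' := ⟨hy, by have h2 : F x 0 = F x0 0 := hxK'.2; simp only [Set.mem_preimage, Set.mem_singleton_iff]; rw [hy0]; exact h2⟩
      exact hxmin y hyK' ⟨j, fun i hij => heq i.succ (Fin.succ_lt_succ_iff.mpr hij), hlt⟩

/-- An infinite strategic game with nonempty compact strategy
sets `X_i ⊆ ℝ^{n_i}` that has the LIP for a function `φ` that is continuous on
the strategy space possesses a strong Nash equilibrium. -/
theorem stmt_14 {ι : Type*} [Fintype ι] [Nonempty ι] (n : ι → ℕ)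
    (Xs : ∀ i, Set (Fin (n i) → ℝ))
    (hne : ∀ i, (Xs i).Nonempty) (hcomp : ∀ i, IsCompact (Xs i))
    (π : (∀ i, Fin (n i) → ℝ) → ι → ℝ) (hπ : ∀ x i, 0 ≤ π x i)
    (q : ℕ) (φ : (∀ i, Fin (n i) → ℝ) → Fin q → ℝ)
    (hφnn : ∀ x j, 0 ≤ φ x j)
    (hcont : ContinuousOn φ {x | ∀ i, x i ∈ Xs i})
    (hlip : ∀ x y, (∀ i, x i ∈ Xs i) → (∀ i, y i ∈ Xs i) →
      ImprovingMove π x y → SLexLt (φ y) (φ x)) :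
    ∃ x : ∀ i, Fin (n i) → ℝ, (∀ i, x i ∈ Xs i) ∧
      ∀ y, (∀ i, y i ∈ Xs i) → ¬ ImprovingMove π x y := by
  set K : Set (∀ i, Fin (n i) → ℝ) := {x | ∀ i, x i ∈ Xs i} with hKdef
  have hKeq : K = Set.pi Set.univ Xs := by
    ext x; simp [hKdef, Set.mem_pi]
  have hKcomp : IsCompact K := hKeq ▸ isCompact_univ_pi hcomp
  have hKne : K.Nonempty := ⟨fun i => (hne i).some, fun i => (hne i).some_mem⟩
  have hFcont : ∀ j : Fin q, ContinuousOn (fun x => sortDesc (φ x) j) K := by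
    intro j
    have : (fun x => sortDesc (φ x) j) = fun x => kthMax (φ x) j := by
      funext x; exact sortDesc_eq_kthMax (φ x) j
    rw [this]
    exact kthMax_continuousOn φ hcont j
  obtain ⟨x, hxK, hxmin⟩ := lexmin q K hKcomp hKne (fun x => sortDesc (φ x)) hFcont
  refine ⟨x, hxK, fun y hy him => ?_⟩
  exact hxmin y hy (hlip x y hxK hy him)
end

section
/- Every infinite bottleneck congestion game G = (N, Δ, π) in which all cost functions c_f : ℝ≥0 → ℝ≥0 are nondecreasing and continuous possesses a strong Nash equilibrium. -/
open Finset

open scoped NNReal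

/-- The load of facility `f` under a splittable strategy profile `ξ`:
the sum of all intensities put on pure strategies containing `f`. -/
noncomputable def facLoad {ι F : Type*} [Fintype ι] [Fintype F] [DecidableEq F] {ni : ι → ℕ}
    (strat : ∀ i, Fin (ni i) → Finset F) (ξ : ∀ i, Fin (ni i) → ℝ≥0) (f : F) : ℝ≥0 :=
  ∑ i, ∑ j ∈ Finset.univ.filter (fun j => f ∈ strat i j), ξ i j

/-- The set `F_i(ξ)` of facilities used by player `i` under profile `ξ`. -/
noncomputable def usedFac {ι F : Type*} [Fintype F] [DecidableEq F] {ni : ι → ℕ}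
    (strat : ∀ i, Fin (ni i) → Finset F) (ξ : ∀ i, Fin (ni i) → ℝ≥0) (i : ι) : Finset F :=
  Finset.univ.filter (fun f => ∃ j, f ∈ strat i j ∧ 0 < ξ i j)

/-- The private (bottleneck) cost `π_i(ξ) = max_{f ∈ F_i(ξ)} c_f(ℓ_f(ξ))` of
player `i` in an infinite bottleneck congestion game. -/
noncomputable def btlCost {ι F : Type*} [Fintype ι] [Fintype F] [DecidableEq F] {ni : ι → ℕ}
    (c : F → ℝ≥0 → ℝ≥0) (strat : ∀ i, Fin (ni i) → Finset F)
    (ξ : ∀ i, Fin (ni i) → ℝ≥0) (i : ι) : ℝ≥0 :=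
  (usedFac strat ξ i).sup (fun f => c f (facLoad strat ξ f))

/-!
For strictly increasing costs, take a profile that lexicographically minimises the vector of
facility costs sorted in non-increasing order (it exists by compactness, minimising the `k`-th
largest cost stage by stage). If a coalition improves from it, let `v` be the largest old cost of a
deviator: a facility whose new cost reaches `v` cannot have gained load, since a deviator using it
would now pay at least `v`; and the bottleneck facility of a deviator paying `v` is abandoned by
the whole coalition, so its cost drops below `v`. Hence the sorted cost vector decreases.

For merely nondecreasing continuous costs, perturb them to `c_f(t) + εt`, and pass to the limit
`ε → 0` along a convergent subsequence of strong equilibria: private costs are lower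
semicontinuous in the profile, while the cost of a deviation with fixed support is continuous.
-/

open Filter Topology

section kthLargest

variable {F α : Type*} [Fintype F] [LinearOrder α] [OrderBot α]

/-- The `k`-th largest entry of `v`, counting from `1`; it is `⊥` for `k = 0` and
`k > Fintype.card F`. -/
noncomputable def kthLargest (k : ℕ) (v : F → α) : α :=
  (univ.powersetCard k).sup fun A => if h : A.Nonempty then A.inf' h v else ⊥

lemma le_kthLargest {k : ℕ} {v : F → α} {t : α} (A : Finset F) (hA : #A = k) (hne : A.Nonempty)
    (h : ∀ f ∈ A, t ≤ v f) : t ≤ kthLargest k v :=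
  le_sup_of_le (mem_powersetCard.2 ⟨subset_univ A, hA⟩) <| by
    simpa only [dif_pos hne] using le_inf' hne v h

lemma kthLargest_le {k : ℕ} {v : F → α} {t : α}
    (h : ∀ (A : Finset F) (hne : A.Nonempty), #A = k → A.inf' hne v ≤ t) :
    kthLargest k v ≤ t := by
  refine Finset.sup_le fun A hA => ?_
  split_ifs with hne
  exacts [h A hne (mem_powersetCard.1 hA).2, bot_le]

lemma exists_card_eq_of_le_kthLargest {k : ℕ} {v : F → α} {t : α} (ht : ⊥ < t)
    (h : t ≤ kthLargest k v) : ∃ A : Finset F, #A = k ∧ ∀ f ∈ A, t ≤ v f := by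
  obtain ⟨A, hA, htA⟩ := (Finset.le_sup_iff ht).1 h
  split_ifs at htA with hne
  · exact ⟨A, (mem_powersetCard.1 hA).2, fun f hf => htA.trans (inf'_le v hf)⟩
  · exact absurd htA (not_le.2 ht)

lemma continuous_kthLargest [TopologicalSpace α] [OrderClosedTopology α] {X : Type*}
    [TopologicalSpace X] (k : ℕ) {w : X → F → α} (hw : ∀ f, Continuous fun x => w x f) :
    Continuous fun x => kthLargest k (w x) := by
  refine Continuous.finset_sup_apply fun A _ => ?_
  split_ifs with hne
  exacts [Continuous.finset_inf'_apply hne fun f _ => hw f, continuous_const]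

/-- The sorted vectors separate at rank `#{f | v ≤ b f}`. -/
lemma exists_kthLargest_lt [DecidableEq F] {a b : F → α} {v : α} {g : F}
    (hab : ∀ f, v ≤ a f → a f ≤ b f) (hbg : v ≤ b g) (hag : a g < v) :
    ∃ k < Fintype.card F, (∀ j < k, kthLargest (j + 1) a ≤ kthLargest (j + 1) b) ∧
      kthLargest (k + 1) a < kthLargest (k + 1) b := by
  set B := univ.filter fun f => v ≤ b f
  have hgB : g ∈ B := mem_filter.2 ⟨mem_univ g, hbg⟩
  have hB : 0 < #B := card_pos.2 ⟨g, hgB⟩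
  have hle : ∀ r, 0 < r → r ≤ #B → kthLargest r a ≤ kthLargest r b := by
    intro r hr hrB
    refine kthLargest_le fun A hne hA => ?_
    rcases le_or_gt v (A.inf' hne a) with hv | hv
    · exact le_kthLargest A hA hne fun f hf =>
        (inf'_le a hf).trans (hab f (hv.trans (inf'_le a hf)))
    · obtain ⟨A', hA'B, hA'⟩ := exists_subset_card_eq hrB
      exact hv.le.trans <| le_kthLargest A' hA' (card_pos.1 (hA' ▸ hr)) fun f hf =>
        (mem_filter.1 (hA'B hf)).2
  have hlt : kthLargest #B a < v := by
    by_contra! hv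
    obtain ⟨A, hA, hvA⟩ := exists_card_eq_of_le_kthLargest (bot_le.trans_lt hag) hv
    have hAB : A ⊆ B.erase g := fun f hf => mem_erase.2
      ⟨fun hfg => (hfg ▸ hag).not_ge (hvA f hf),
        mem_filter.2 ⟨mem_univ f, (hvA f hf).trans (hab f (hvA f hf))⟩⟩
    have := card_le_card hAB
    rw [hA, card_erase_of_mem hgB] at this
    omega
  have hBF : #B ≤ Fintype.card F := card_le_univ B
  refine ⟨#B - 1, by omega, fun j hj => hle (j + 1) j.succ_pos (by omega), ?_⟩
  rw [Nat.sub_add_cancel hB]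
  exact hlt.trans_le (le_kthLargest B rfl ⟨g, hgB⟩ fun f hf => (mem_filter.1 hf).2)

end kthLargest

lemma IsCompact.exists_lexMin {X β : Type*} [TopologicalSpace X] [LinearOrder β]
    [TopologicalSpace β] [OrderClosedTopology β] {K : Set X} (hK : IsCompact K)
    (hne : K.Nonempty) (m : ℕ) {V : ℕ → X → β} (hV : ∀ k, Continuous (V k)) :
    ∃ x ∈ K, ∀ y ∈ K, ∀ k < m, (∀ j < k, V j y ≤ V j x) → ¬ V k y < V k x := by
  induction m generalizing V K with
  | zero => exact ⟨hne.some, hne.some_mem, fun y _ k hk => absurd hk k.not_lt_zero⟩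
  | succ m ih =>
    obtain ⟨x₀, hx₀, hmin⟩ := hK.exists_isMinOn hne (hV 0).continuousOn
    obtain ⟨x, ⟨hxK, hx⟩, hlex⟩ := ih (hK.inter_right (isClosed_le (hV 0) continuous_const))
      ⟨x₀, hx₀, le_rfl⟩ (V := fun k => V (k + 1)) fun k => hV (k + 1)
    refine ⟨x, hxK, fun y hy k hk hprev hlt => ?_⟩
    cases k with
    | zero => exact hlt.not_ge (hx.trans (hmin hy))
    | succ k =>
      exact hlex y ⟨hy, (hprev 0 k.succ_pos).trans hx⟩ k (by omega)
        (fun j hj => hprev (j + 1) (by omega)) hlt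

section game

variable {ι F : Type*} [Fintype F] [DecidableEq F] {ni : ι → ℕ}
  (strat : ∀ i, Fin (ni i) → Finset F)

noncomputable def playerLoad (x : ∀ i, Fin (ni i) → ℝ≥0) (i : ι) (f : F) : ℝ≥0 :=
  ∑ j ∈ univ.filter (fun j => f ∈ strat i j), x i j

lemma mem_usedFac {x : ∀ i, Fin (ni i) → ℝ≥0} {i : ι} {f : F} :
    f ∈ usedFac strat x i ↔ ∃ j, f ∈ strat i j ∧ 0 < x i j := by
  simp [usedFac]

lemma playerLoad_pos_iff {x : ∀ i, Fin (ni i) → ℝ≥0} {i : ι} {f : F} :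
    0 < playerLoad strat x i f ↔ f ∈ usedFac strat x i := by
  simp [playerLoad, sum_pos_iff, mem_usedFac]

lemma playerLoad_eq_zero_iff {x : ∀ i, Fin (ni i) → ℝ≥0} {i : ι} {f : F} :
    playerLoad strat x i f = 0 ↔ f ∉ usedFac strat x i := by
  rw [← playerLoad_pos_iff, pos_iff_ne_zero, not_not]

lemma usedFac_congr {x y : ∀ i, Fin (ni i) → ℝ≥0} {i : ι} (h : y i = x i) :
    usedFac strat y i = usedFac strat x i := by
  simp [usedFac, h]

variable (ni) in
def strategySpace (d : ι → ℝ≥0) : Set (∀ i, Fin (ni i) → ℝ≥0) :=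
  {x | ∀ i, ∑ j, x i j = d i}

variable (ni) in
lemma isCompact_strategySpace (d : ι → ℝ≥0) : IsCompact (strategySpace ni d) := by
  refine (isCompact_univ_pi fun i => isCompact_univ_pi fun _ => isCompact_Icc (a := 0) (b := d i))
    |>.of_isClosed_subset ?_ fun x hx => ?_
  · simp only [strategySpace, Set.ofPred_forall]
    exact isClosed_iInter fun i => isClosed_eq (by fun_prop) continuous_const
  · exact Set.mem_univ_pi.2 fun i => Set.mem_univ_pi.2 fun j =>
      ⟨zero_le, hx i ▸ single_le_sum (fun _ _ => zero_le) (mem_univ j)⟩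

lemma strategySpace_nonempty (hni : ∀ i, 0 < ni i) (d : ι → ℝ≥0) :
    (strategySpace ni d).Nonempty :=
  ⟨fun i j => if j = ⟨0, hni i⟩ then d i else 0, fun i => by simp⟩

variable [Fintype ι]

def IsStrongEquilibrium (c : F → ℝ≥0 → ℝ≥0) (d : ι → ℝ≥0) (ξ : ∀ i, Fin (ni i) → ℝ≥0) :
    Prop :=
  ξ ∈ strategySpace ni d ∧ ∀ ν ∈ strategySpace ni d, ¬ ImprovingMove (btlCost c strat) ξ ν

lemma facLoad_eq_sum_playerLoad (x : ∀ i, Fin (ni i) → ℝ≥0) (f : F) :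
    facLoad strat x f = ∑ i, playerLoad strat x i f := rfl

lemma continuous_facLoad (f : F) :
    Continuous fun x : ∀ i, Fin (ni i) → ℝ≥0 => facLoad strat x f := by
  unfold facLoad
  fun_prop

lemma cost_le_btlCost (c : F → ℝ≥0 → ℝ≥0) {x : ∀ i, Fin (ni i) → ℝ≥0} {i : ι} {f : F}
    (hf : f ∈ usedFac strat x i) : c f (facLoad strat x f) ≤ btlCost c strat x i :=
  le_sup (f := fun f => c f (facLoad strat x f)) hf

lemma exists_mem_usedFac_of_facLoad_lt {x y : ∀ i, Fin (ni i) → ℝ≥0} {S : Finset ι}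
    (hout : ∀ i ∉ S, y i = x i) {f : F} (h : facLoad strat x f < facLoad strat y f) :
    ∃ i ∈ S, f ∈ usedFac strat y i := by
  obtain ⟨i, -, hi⟩ := exists_lt_of_sum_lt h
  refine ⟨i, by_contra fun hiS => ?_, (playerLoad_pos_iff strat).1 (pos_of_gt hi)⟩
  simp [hout i hiS] at hi

/-- `v` is the largest old cost in the coalition and `g` the bottleneck facility of a deviator
paying `v`. -/
lemma ImprovingMove.exists_threshold {c : F → ℝ≥0 → ℝ≥0} (hc : ∀ f, StrictMono (c f))
    {ξ ν : ∀ i, Fin (ni i) → ℝ≥0} (h : ImprovingMove (btlCost c strat) ξ ν) :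
    ∃ v g, (∀ f, v ≤ c f (facLoad strat ν f) →
        c f (facLoad strat ν f) ≤ c f (facLoad strat ξ f)) ∧
      v ≤ c g (facLoad strat ξ g) ∧ c g (facLoad strat ν g) < v := by
  obtain ⟨S, hS, hout, hin⟩ := h
  obtain ⟨i₀, hi₀, hmax⟩ := exists_max_image S (btlCost c strat ξ) hS
  set v := btlCost c strat ξ i₀
  have hbelow : ∀ i ∈ S, ∀ f ∈ usedFac strat ν i, c f (facLoad strat ν f) < v :=
    fun i hi f hf => (cost_le_btlCost strat c hf).trans_lt ((hin i hi).trans_le (hmax i hi))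
  have hused : (usedFac strat ξ i₀).Nonempty := by
    by_contra! hempty
    simpa [v, btlCost, hempty] using hin i₀ hi₀
  obtain ⟨g, hg, hgv⟩ := exists_mem_eq_sup _ hused fun f => c f (facLoad strat ξ f)
  refine ⟨v, g, fun f hvf => (hc f).monotone ?_, hgv.le, ?_⟩
  · by_contra! hlt
    obtain ⟨i, hi, hf⟩ := exists_mem_usedFac_of_facLoad_lt strat hout hlt
    exact (hbelow i hi f hf).not_ge hvf
  · by_contra! hvg
    have hunused : ∀ i ∈ S, playerLoad strat ν i g = 0 := fun i hi =>
      (playerLoad_eq_zero_iff strat).2 fun hg => (hbelow i hi g hg).not_ge hvg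
    have hload : facLoad strat ν g < facLoad strat ξ g := by
      rw [facLoad_eq_sum_playerLoad, facLoad_eq_sum_playerLoad]
      refine sum_lt_sum (fun i _ => ?_) ⟨i₀, mem_univ i₀, ?_⟩
      · by_cases hi : i ∈ S
        · simp [hunused i hi]
        · simp [playerLoad, hout i hi]
      · rw [hunused i₀ hi₀]
        exact (playerLoad_pos_iff strat).2 hg
    exact (hc g hload).not_ge (hgv ▸ hvg)

theorem exists_isStrongEquilibrium_of_strictMono (hni : ∀ i, 0 < ni i) (d : ι → ℝ≥0)
    {c : F → ℝ≥0 → ℝ≥0} (hc : ∀ f, StrictMono (c f)) (hcont : ∀ f, Continuous (c f)) :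
    ∃ ξ, IsStrongEquilibrium strat c d ξ := by
  obtain ⟨ξ, hξ, hmin⟩ := (isCompact_strategySpace ni d).exists_lexMin
    (strategySpace_nonempty hni d) (Fintype.card F)
    (V := fun k x => kthLargest (k + 1) fun f => c f (facLoad strat x f))
    fun k => continuous_kthLargest _ fun f => (hcont f).comp (continuous_facLoad strat f)
  refine ⟨ξ, hξ, fun ν hν hmove => ?_⟩
  obtain ⟨v, g, hab, hbg, hag⟩ := hmove.exists_threshold strat hc
  obtain ⟨k, hk, hprev, hlt⟩ := exists_kthLargest_lt hab hbg hag
  exact hmin ν hν k hk hprev hlt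

variable {P : Type*} [TopologicalSpace P] {C : P → F → ℝ≥0 → ℝ≥0}

lemma continuous_sup_cost (hC : ∀ f, Continuous fun q : P × ℝ≥0 => C q.1 f q.2) (U : Finset F) :
    Continuous fun q : P × (∀ i, Fin (ni i) → ℝ≥0) =>
      U.sup fun f => C q.1 f (facLoad strat q.2 f) :=
  Continuous.finset_sup_apply fun f _ =>
    (hC f).comp (continuous_fst.prodMk ((continuous_facLoad strat f).comp continuous_snd))

/-- Near a profile a player keeps using at least the facilities she uses there. -/
lemma lowerSemicontinuous_btlCost (hC : ∀ f, Continuous fun q : P × ℝ≥0 => C q.1 f q.2)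
    (i : ι) : LowerSemicontinuous fun q : P × (∀ i, Fin (ni i) → ℝ≥0) =>
      btlCost (C q.1) strat q.2 i := by
  intro q t ht
  have hpos : ∀ᶠ q' in 𝓝 q, ∀ j, 0 < q.2 i j → 0 < q'.2 i j :=
    eventually_all.2 fun j => by
      by_cases hj : 0 < q.2 i j
      · have hcont : Continuous fun q' : P × (∀ i, Fin (ni i) → ℝ≥0) => q'.2 i j := by fun_prop
        exact (hcont.continuousAt.eventually (lt_mem_nhds hj)).mono fun _ h _ => h
      · exact Eventually.of_forall fun _ h => absurd h hj
  filter_upwards [hpos, (continuous_sup_cost strat hC (usedFac strat q.2 i)).continuousAt.eventually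
    (lt_mem_nhds ht)] with q' hq' hlt
  refine hlt.trans_le (sup_mono fun f hf => ?_)
  obtain ⟨j, hfj, hj⟩ := (mem_usedFac strat).1 hf
  exact (mem_usedFac strat).2 ⟨j, hfj, hq' j hj⟩

lemma IsStrongEquilibrium.of_tendsto {d : ι → ℝ≥0}
    (hC : ∀ f, Continuous fun q : P × ℝ≥0 => C q.1 f q.2) {α : Type*} {l : Filter α} [l.NeBot]
    {p : α → P} {p₀ : P} {ξ : α → ∀ i, Fin (ni i) → ℝ≥0} {ξ₀ : ∀ i, Fin (ni i) → ℝ≥0}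
    (hp : Tendsto p l (𝓝 p₀)) (hξ : Tendsto ξ l (𝓝 ξ₀))
    (h : ∀ a, IsStrongEquilibrium strat (C (p a)) d (ξ a)) :
    IsStrongEquilibrium strat (C p₀) d ξ₀ := by
  refine ⟨(isCompact_strategySpace ni d).isClosed.mem_of_tendsto hξ
    (Eventually.of_forall fun a => (h a).1), ?_⟩
  rintro ν hν ⟨S, hS, hout, hin⟩
  classical
  set νa := fun a => S.piecewise ν (ξ a)
  have hνa : Tendsto νa l (𝓝 ν) := tendsto_pi_nhds.2 fun i => by
    by_cases hi : i ∈ S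
    · simp [νa, hi]
    · simpa [νa, hi, hout i hi] using tendsto_pi_nhds.1 hξ i
  have hev : ∀ i ∈ S, ∀ᶠ a in l,
      btlCost (C (p a)) strat (νa a) i < btlCost (C (p a)) strat (ξ a) i := by
    intro i hi
    obtain ⟨t, hνt, htξ⟩ := exists_between (hin i hi)
    filter_upwards [(((continuous_sup_cost strat hC (usedFac strat ν i)).tendsto (p₀, ν)).comp
        (hp.prodMk_nhds hνa)).eventually (gt_mem_nhds hνt),
      (hp.prodMk_nhds hξ).eventually (lowerSemicontinuous_btlCost strat hC i (p₀, ξ₀) t htξ)]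
      with a hnew hold
    rw [btlCost, usedFac_congr strat (show νa a i = ν i by simp [νa, hi])]
    exact hnew.trans hold
  obtain ⟨a, ha⟩ := ((eventually_all_finset S).2 hev).exists
  refine (h a).2 (νa a) (fun i => ?_) ⟨S, hS, fun i hi => by simp [νa, hi], ha⟩
  by_cases hi : i ∈ S
  · simpa [νa, hi] using hν i
  · simpa [νa, hi] using (h a).1 i

end game

theorem stmt_18_general {ι F : Type*} [Fintype ι] [Fintype F]
    [DecidableEq F] {ni : ι → ℕ} (hni : ∀ i, 0 < ni i)
    (strat : ∀ i, Fin (ni i) → Finset F)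
    (d : ι → ℝ≥0)
    (c : F → ℝ≥0 → ℝ≥0) (hc : ∀ f, Monotone (c f)) (hcont : ∀ f, Continuous (c f)) :
    ∃ ξ : ∀ i, Fin (ni i) → ℝ≥0, (∀ i, ∑ j, ξ i j = d i) ∧
      ∀ ν : ∀ i, Fin (ni i) → ℝ≥0, (∀ i, ∑ j, ν i j = d i) →
        ¬ ImprovingMove (btlCost c strat) ξ ν := by
  set C : ℝ≥0 → F → ℝ≥0 → ℝ≥0 := fun ε f t => c f t + ε * t
  have hC : ∀ f, Continuous fun q : ℝ≥0 × ℝ≥0 => C q.1 f q.2 := fun f =>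
    ((hcont f).comp continuous_snd).add (continuous_fst.mul continuous_snd)
  have hstrict : ∀ n : ℕ, ∃ ξ, IsStrongEquilibrium strat (C (n + 1 : ℕ)⁻¹) d ξ := fun n =>
    exists_isStrongEquilibrium_of_strictMono strat hni d
      (fun f => (hc f).add_strictMono (strictMono_mul_left_of_pos (by positivity)))
      fun f => (hC f).comp (continuous_const.prodMk continuous_id)
  choose ξ hξ using hstrict
  obtain ⟨ξ₀, -, φ, hφ, hlim⟩ := (isCompact_strategySpace ni d).tendsto_subseq fun n => (hξ n).1
  have hε : Tendsto (fun n => ((φ n + 1 : ℕ) : ℝ≥0)⁻¹) atTop (𝓝 0) :=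
    tendsto_inv_atTop_nhds_zero_nat.comp ((tendsto_add_atTop_nat 1).comp hφ.tendsto_atTop)
  have hsne := IsStrongEquilibrium.of_tendsto strat hC hε hlim fun n => hξ (φ n)
  simp only [C, zero_mul, add_zero] at hsne
  exact ⟨ξ₀, hsne⟩

/-- Every infinite bottleneck congestion game with
nondecreasing continuous facility cost functions possesses a strong Nash
equilibrium. -/
theorem stmt_18 {ι F : Type*} [Fintype ι] [Nonempty ι] [Fintype F] [Nonempty F]
    [DecidableEq F] {ni : ι → ℕ} (hni : ∀ i, 0 < ni i)
    (strat : ∀ i, Fin (ni i) → Finset F) (hstrat : ∀ i j, (strat i j).Nonempty)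
    (d : ι → ℝ≥0) (hd : ∀ i, 0 < d i)
    (c : F → ℝ≥0 → ℝ≥0) (hc : ∀ f, Monotone (c f)) (hcont : ∀ f, Continuous (c f)) :
    ∃ ξ : ∀ i, Fin (ni i) → ℝ≥0, (∀ i, ∑ j, ξ i j = d i) ∧
      ∀ ν : ∀ i, Fin (ni i) → ℝ≥0, (∀ i, ∑ j, ν i j = d i) →
        ¬ ImprovingMove (btlCost c strat) ξ ν :=
  stmt_18_general hni strat d c hc hcont
end
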